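/- Let X, Y, Z be measurable spaces, π a probability measure on X, and c : X ⇝ Y, d : Y ⇝ Z Markov kernels. Suppose c' : Y ⇝ X is a Bayesian inversion of c with respect to π, d' : Z ⇝ Y is a Bayesian inversion of d with respect to c∘π, and e : Z ⇝ X is any Bayesian inversion of the composite d ∘ c with respect to π. Then e is ((d∘c)∘π)-almost-equal to the composite c' ∘ d'; that is, Bayesian updates compose optically: ((d∘c)∘π) ⊗ e = ((d∘c)∘π) ⊗ (c' ∘ d'). -/

import Mathlib

open MeasureTheory ProbabilityTheory

/-- The joint measure of the generative model `(π, c)` on `X × Y`: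
`(π ⊗ c)(E) = ∫ c(x)({y : (x,y) ∈ E}) dπ(x)`. -/
noncomputable def jointMeasure {X Y : Type*} [MeasurableSpace X] [MeasurableSpace Y]
    (π : Measure X) (c : Kernel X Y) : Measure (X × Y) :=
  π.bind (fun x => (c x).map (fun y => (x, y)))

/-- `c' : Y ⇝ X` is a Bayesian inversion of `c : X ⇝ Y` with respect to `π` if the joint
measure `π ⊗ c` equals the pushforward of `(c∘π) ⊗ c'` under the swap map. -/
def IsBayesianInversion {X Y : Type*} [MeasurableSpace X] [MeasurableSpace Y]
    (π : Measure X) (c : Kernel X Y) (c' : Kernel Y X) : Prop :=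
  jointMeasure π c = (jointMeasure (π.bind c) c').map Prod.swap

/-!
Write `ν = c ∘ π`. Applying `d` to the second coordinate of `π ⊗ c` gives `π ⊗ (d ∘ c)`, and by
the inversion property `π ⊗ c` is the swapped `ν ⊗ c'`; hence `π ⊗ (d ∘ c)` is the law of
`(x, z)` where `y ∼ ν` and then `x ∼ c' y`, `z ∼ d y` independently. The same argument with
`d'` in place of `c` (and `ν ⊗ d` as the swapped `(d ∘ ν) ⊗ d'`) shows that
`(d ∘ ν) ⊗ (c' ∘ d')` is the law of `(z, x)` drawn in that same way, which by `he` is also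
`(d ∘ ν) ⊗ e`.
-/

namespace ProbabilityTheory

open Measure

variable {X Y Z : Type*} [MeasurableSpace X] [MeasurableSpace Y] [MeasurableSpace Z]

lemma jointMeasure_eq_compProd (π : Measure X) [SFinite π] (c : Kernel X Y) [IsSFiniteKernel c] :
    jointMeasure π c = π ⊗ₘ c := by
  rw [compProd_eq_comp_prod, jointMeasure]
  congr with x : 1
  rw [Kernel.prod_apply, Kernel.id_apply, dirac_prod]

lemma IsBayesianInversion.jointMeasure_bind {π : Measure X} {c : Kernel X Y} {c' : Kernel Y X}
    (h : IsBayesianInversion π c c') :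
    jointMeasure (π.bind c) c' = (jointMeasure π c).map Prod.swap := by
  rw [h, map_map measurable_swap measurable_swap, Prod.swap_swap_eq, map_id]

lemma map_swap_comp_prod (μ : Measure X) (κ : Kernel X Y) [IsSFiniteKernel κ]
    (η : Kernel X Z) [IsSFiniteKernel η] :
    ((κ ×ₖ η) ∘ₘ μ).map Prod.swap = (η ×ₖ κ) ∘ₘ μ := by
  rw [← deterministic_comp_eq_map measurable_swap, ← Kernel.swap, comp_assoc, Kernel.swap_prod]

lemma compProd_comp_eq_comp_prod_of_compProd_eq_map_swap {μ : Measure X} [SFinite μ]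
    {ρ : Measure Y} [SFinite ρ] {κ : Kernel X Y} [IsSFiniteKernel κ] {κ' : Kernel Y X}
    [IsSFiniteKernel κ'] (h : μ ⊗ₘ κ = (ρ ⊗ₘ κ').map Prod.swap)
    (η : Kernel Y Z) [IsSFiniteKernel η] :
    μ ⊗ₘ (η ∘ₖ κ) = (κ' ×ₖ η) ∘ₘ ρ := by
  rw [← parallelComp_comp_compProd, h, compProd_eq_comp_prod, map_swap_comp_prod, comp_assoc,
    Kernel.parallelComp_comp_prod, Kernel.id_comp, Kernel.comp_id]

end ProbabilityTheory

theorem bayesian_updates_compose_optically_general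
    {X Y Z : Type*} [MeasurableSpace X] [MeasurableSpace Y] [MeasurableSpace Z]
    (π : Measure X) [IsProbabilityMeasure π]
    (c : Kernel X Y) [IsMarkovKernel c] (d : Kernel Y Z) [IsMarkovKernel d]
    (c' : Kernel Y X) [IsMarkovKernel c'] (d' : Kernel Z Y) [IsMarkovKernel d']
    (e : Kernel Z X)
    (hc : IsBayesianInversion π c c')
    (hd : IsBayesianInversion (π.bind c) d d')
    (he : IsBayesianInversion π (d ∘ₖ c) e) :
    jointMeasure (π.bind (d ∘ₖ c)) e = jointMeasure (π.bind (d ∘ₖ c)) (c' ∘ₖ d') := by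
  have hd' := hd.jointMeasure_bind
  simp only [IsBayesianInversion, jointMeasure_eq_compProd] at hc hd'
  rw [he.jointMeasure_bind, ← Measure.comp_assoc, jointMeasure_eq_compProd,
    jointMeasure_eq_compProd, compProd_comp_eq_comp_prod_of_compProd_eq_map_swap hc,
    compProd_comp_eq_comp_prod_of_compProd_eq_map_swap hd', map_swap_comp_prod]

/-- Bayesian updates compose optically: any Bayesian inversion `e` of the composite `d ∘ c`
w.r.t. `π` is `((d∘c)∘π)`-almost-equal to the lens composite `c' ∘ d'` of the component
inversions. -/
theorem bayesian_updates_compose_optically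
    {X Y Z : Type*} [MeasurableSpace X] [MeasurableSpace Y] [MeasurableSpace Z]
    (π : Measure X) [IsProbabilityMeasure π]
    (c : Kernel X Y) [IsMarkovKernel c] (d : Kernel Y Z) [IsMarkovKernel d]
    (c' : Kernel Y X) [IsMarkovKernel c'] (d' : Kernel Z Y) [IsMarkovKernel d']
    (e : Kernel Z X) [IsMarkovKernel e]
    (hc : IsBayesianInversion π c c')
    (hd : IsBayesianInversion (π.bind c) d d')
    (he : IsBayesianInversion π (d ∘ₖ c) e) :
    jointMeasure (π.bind (d ∘ₖ c)) e = jointMeasure (π.bind (d ∘ₖ c)) (c' ∘ₖ d') :=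
  bayesian_updates_compose_optically_general π c d c' d' e hc hd he
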